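/- Link substitution commutes with graph substitution: for any template T, graph G with fn(G) = {X⃗} (X⃗ pairwise distinct), and links Y, Z with Y fresh as appropriate, T[G / x[X⃗]]⟨Y/Z⟩ = T⟨Y/Z⟩[G / x[X⃗]]. -/

import Mathlib

/-- λ_GT graph templates: `0`, atoms `p(X⃗)`, fusions `X ⋈ Y`,
molecules `(T,T)`, hyperlink creation `νX.T`, graph variables `x[X⃗]`.
Links are natural numbers; atom names are abstract labels. -/
inductive GT where
  | zero : GT
  | atom : String → List ℕ → GT
  | fuse : ℕ → ℕ → GT
  | mol : GT → GT → GT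
  | nu : ℕ → GT → GT
  | gvar : String → List ℕ → GT

namespace GT

/-- Free links of a template. -/
def fn : GT → Finset ℕ
  | zero => ∅
  | atom _ ls => ls.toFinset
  | fuse x y => {x, y}
  | mol t₁ t₂ => fn t₁ ∪ fn t₂
  | nu x t => (fn t).erase x
  | gvar _ ls => ls.toFinset

/-- A link fresh with respect to a finite set. -/
def fresh (s : Finset ℕ) : ℕ := s.sup id + 1

/-- Capture-avoiding simultaneous renaming of free links. -/
def ren (σ : ℕ → ℕ) : GT → GT
  | zero => zero
  | atom p ls => atom p (ls.map σ)
  | fuse x y => fuse (σ x) (σ y)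
  | mol t₁ t₂ => mol (ren σ t₁) (ren σ t₂)
  | gvar x ls => gvar x (ls.map σ)
  | nu x t =>
      let w := fresh (((fn t).erase x).image σ)
      nu w (ren (Function.update σ x w) t)

/-- Capture-avoiding link substitution `T⟨y/x⟩`, replacing free occurrences
of `x` by `y`. -/
def lsubst (t : GT) (y x : ℕ) : GT := ren (Function.update id x y) t

/-- Structural congruence on λ_GT graph templates: the least equivalence
relation closed under rules (E1)–(E10). -/
inductive Cong : GT → GT → Prop where
  | refl (t : GT) : Cong t t
  | symm {t₁ t₂ : GT} : Cong t₁ t₂ → Cong t₂ t₁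
  | trans {t₁ t₂ t₃ : GT} : Cong t₁ t₂ → Cong t₂ t₃ → Cong t₁ t₃
  | e1 (t : GT) : Cong (mol zero t) t
  | e2 (t₁ t₂ : GT) : Cong (mol t₁ t₂) (mol t₂ t₁)
  | e3 (t₁ t₂ t₃ : GT) : Cong (mol t₁ (mol t₂ t₃)) (mol (mol t₁ t₂) t₃)
  | e4 {t₁ t₂ : GT} (t₃ : GT) : Cong t₁ t₂ → Cong (mol t₁ t₃) (mol t₂ t₃)
  | e5 {t₁ t₂ : GT} (x : ℕ) : Cong t₁ t₂ → Cong (nu x t₁) (nu x t₂)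
  | e6 {x y : ℕ} {t : GT} : x ∈ fn t ∨ y ∈ fn t →
      Cong (nu x (mol (fuse x y) t)) (nu x (lsubst t y x))
  | e7 (x y : ℕ) : Cong (nu x (nu y (fuse x y))) zero
  | e8 (x : ℕ) : Cong (nu x zero) zero
  | e9 (x y : ℕ) (t : GT) : Cong (nu x (nu y t)) (nu y (nu x t))
  | e10 {x : ℕ} {t₂ : GT} (t₁ : GT) : x ∉ fn t₂ →
      Cong (nu x (mol t₁ t₂)) (mol (nu x t₁) t₂)

/-- The finite renaming `⟨ls/Xs⟩` sending each `Xsᵢ` to `lsᵢ`. -/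
def mkRen (Xs ls : List ℕ) : ℕ → ℕ := fun w =>
  match (Xs.zip ls).find? (fun p => p.1 = w) with
  | some p => p.2
  | none => w

/-- Graph substitution `T[G / x[Xs]]`: every occurrence of the graph variable
`x` (with the same arity) is replaced by `G` with its free links `Xs` renamed
to the links of the occurrence. -/
def gsubst (x : String) (Xs : List ℕ) (G : GT) : GT → GT
  | zero => zero
  | atom p ls => atom p ls
  | fuse a b => fuse a b
  | mol t₁ t₂ => mol (gsubst x Xs G t₁) (gsubst x Xs G t₂)
  | nu z t => nu z (gsubst x Xs G t)
  | gvar y ls =>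
      if y = x ∧ ls.length = Xs.length then ren (mkRen Xs ls) G else gvar y ls

end GT

namespace GT

lemma fresh_not_mem (s : Finset ℕ) : fresh s ∉ s := by
  intro h
  have := Finset.le_sup (f := id) h
  simp only [id, fresh] at this
  omega

lemma toFinset_map' (l : List ℕ) (f : ℕ → ℕ) :
    (l.map f).toFinset = l.toFinset.image f := by
  induction l with
  | nil => simp
  | cons a l ih => simp [ih]

lemma image_update_erase (σ : ℕ → ℕ) (x : ℕ) (s : Finset ℕ)
    (w : ℕ) (hw : w ∉ (s.erase x).image σ) :
    (s.image (Function.update σ x w)).erase w = (s.erase x).image σ := by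
  ext a
  simp only [Finset.mem_erase, Finset.mem_image] at *
  constructor
  · rintro ⟨ha, b, hb, rfl⟩
    by_cases hbx : b = x
    · subst hbx; simp [Function.update_self] at ha
    · exact ⟨b, ⟨hbx, hb⟩, by rw [Function.update_of_ne hbx]⟩
  · rintro ⟨b, ⟨hbx, hb⟩, rfl⟩
    refine ⟨?_, b, hb, Function.update_of_ne hbx _ _⟩
    intro he
    exact hw ⟨b, ⟨hbx, hb⟩, he⟩

lemma fn_ren (σ : ℕ → ℕ) (t : GT) : (ren σ t).fn = t.fn.image σ := by
  induction t generalizing σ with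
  | zero => simp [ren, fn]
  | atom p ls => simp [ren, fn, toFinset_map']
  | fuse a b => simp [ren, fn, Finset.image_insert]
  | mol t1 t2 ih1 ih2 => simp [ren, fn, ih1, ih2, Finset.image_union]
  | gvar y ls => simp [ren, fn, toFinset_map']
  | nu z t ih =>
    simp only [ren, fn, ih]
    exact image_update_erase σ z (fn t) _ (fresh_not_mem _)

lemma ren_congr {σ σ' : ℕ → ℕ} {t : GT} (h : ∀ a ∈ fn t, σ a = σ' a) :
    ren σ t = ren σ' t := by
  induction t generalizing σ σ' with
  | zero => rfl
  | atom p ls =>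
    simp only [ren, atom.injEq, true_and]
    exact List.map_congr_left fun a ha => h a (by simp [fn, ha])
  | fuse a b => simp [ren, h a (by simp [fn]), h b (by simp [fn])]
  | mol t1 t2 ih1 ih2 =>
    simp only [ren, mol.injEq]
    exact ⟨ih1 fun a ha => h a (by simp [fn, ha]),
           ih2 fun a ha => h a (by simp [fn, ha])⟩
  | gvar y ls =>
    simp only [ren, gvar.injEq, true_and]
    exact List.map_congr_left fun a ha => h a (by simp [fn, ha])
  | nu z t ih =>
    have himg : ((fn t).erase z).image σ = ((fn t).erase z).image σ' :=
      Finset.image_congr fun a ha => h a ha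
    simp only [ren, himg, nu.injEq, true_and]
    refine ih fun a ha => ?_
    by_cases haz : a = z
    · subst haz; simp
    · rw [Function.update_of_ne haz, Function.update_of_ne haz]
      exact h a (Finset.mem_erase.mpr ⟨haz, ha⟩)

lemma ren_ren (σ τ : ℕ → ℕ) (t : GT) : ren σ (ren τ t) = ren (σ ∘ τ) t := by
  induction t generalizing σ τ with
  | zero => rfl
  | atom p ls => simp [ren]
  | fuse a b => simp [ren]
  | mol t1 t2 ih1 ih2 => simp [ren, ih1, ih2]
  | gvar y ls => simp [ren]
  | nu z t ih =>
    simp only [ren]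
    rw [ih, fn_ren, image_update_erase τ z (fn t) _ (fresh_not_mem _),
      Finset.image_image]
    refine congrArg _ (ren_congr fun a ha => ?_)
    by_cases haz : a = z
    · subst haz
      show Function.update σ _ _ (Function.update τ a _ a) = _
      rw [Function.update_self, Function.update_self, Function.update_self]
    · have hτ : τ a ≠ fresh (((fn t).erase z).image τ) := fun he =>
        fresh_not_mem _ (Finset.mem_image.mpr ⟨a, Finset.mem_erase.mpr ⟨haz, ha⟩, he⟩)
      show Function.update σ _ _ (Function.update τ z _ a) = _
      rw [Function.update_of_ne haz, Function.update_of_ne hτ,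
        Function.update_of_ne haz, Function.comp_apply]

lemma mkRen_map {w : ℕ} (Xs ls : List ℕ) (f : ℕ → ℕ)
    (hlen : ls.length = Xs.length) (hw : w ∈ Xs) :
    mkRen Xs (ls.map f) w = f (mkRen Xs ls w) := by
  have hz : Xs.zip (ls.map f) = (Xs.zip ls).map (Prod.map id f) := by
    rw [List.zip_map_right]
  have hex : ∃ p, (Xs.zip ls).find? (fun p => p.1 = w) = some p := by
    have hXs : (Xs.zip ls).map Prod.fst = Xs := List.map_fst_zip (le_of_eq hlen.symm)
    rw [← hXs] at hw
    obtain ⟨p, hp, hp2⟩ := List.mem_map.mp hw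
    cases h : (Xs.zip ls).find? (fun p => p.1 = w) with
    | none => exact absurd hp2 (by simpa using List.find?_eq_none.mp h p hp)
    | some q => exact ⟨q, rfl⟩
  obtain ⟨p, hp⟩ := hex
  have hcomp : ((fun p : ℕ × ℕ => decide (p.1 = w)) ∘ Prod.map id f)
      = fun p : ℕ × ℕ => decide (p.1 = w) := by
    funext q; simp [Prod.map]
  simp only [mkRen, hz, List.find?_map, hcomp, hp, Option.map_some, Prod.map_snd]

lemma mkRen_cons_self (X l : ℕ) (Xs ls : List ℕ) :
    mkRen (X :: Xs) (l :: ls) X = l := by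
  unfold mkRen
  rw [List.zip_cons_cons, List.find?_cons_of_pos (p := fun p : ℕ × ℕ => decide (p.1 = X)) (by simp)]

lemma mkRen_cons_ne {w X : ℕ} (h : w ≠ X) (l : ℕ) (Xs ls : List ℕ) :
    mkRen (X :: Xs) (l :: ls) w = mkRen Xs ls w := by
  unfold mkRen
  rw [List.zip_cons_cons, List.find?_cons_of_neg (p := fun p : ℕ × ℕ => decide (p.1 = w)) (by simp [Ne.symm h])]

lemma map_mkRen (Xs ls : List ℕ) (hnd : Xs.Nodup) (hlen : ls.length = Xs.length) :
    Xs.map (mkRen Xs ls) = ls := by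
  induction Xs generalizing ls with
  | nil =>
    have : ls = [] := List.length_eq_zero_iff.mp (by simpa using hlen)
    simp [this]
  | cons X Xs ih =>
    rcases ls with _ | ⟨l, ls⟩
    · simp at hlen
    · simp only [List.map_cons, mkRen_cons_self]
      have hnd' := List.nodup_cons.mp hnd
      have heq : Xs.map (mkRen (X :: Xs) (l :: ls)) = Xs.map (mkRen Xs ls) :=
        List.map_congr_left fun a ha =>
          mkRen_cons_ne (by rintro rfl; exact hnd'.1 ha) _ _ _
      rw [heq, ih ls hnd'.2 (by simpa using hlen)]

lemma fn_gsubst (x : String) (Xs : List ℕ) (G : GT) (hnd : Xs.Nodup)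
    (hfn : G.fn = Xs.toFinset) (t : GT) : (gsubst x Xs G t).fn = t.fn := by
  induction t with
  | zero => rfl
  | atom p ls => rfl
  | fuse a b => rfl
  | mol t1 t2 ih1 ih2 => simp [gsubst, fn, ih1, ih2]
  | nu z t ih => simp [gsubst, fn, ih]
  | gvar y ls =>
    simp only [gsubst]
    split
    · next h =>
      rw [fn_ren, hfn, ← toFinset_map', map_mkRen Xs ls hnd h.2]
      rfl
    · rfl

lemma ren_gsubst_comm (σ : ℕ → ℕ) (x : String) (Xs : List ℕ) (G : GT)
    (hnd : Xs.Nodup) (hfn : G.fn = Xs.toFinset) (t : GT) :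
    ren σ (gsubst x Xs G t) = gsubst x Xs G (ren σ t) := by
  induction t generalizing σ with
  | zero => rfl
  | atom p ls => rfl
  | fuse a b => rfl
  | mol t1 t2 ih1 ih2 => simp [gsubst, ren, ih1, ih2]
  | nu z t ih =>
    simp only [gsubst, ren, fn_gsubst x Xs G hnd hfn, ih]
  | gvar y ls =>
    simp only [gsubst, ren]
    by_cases h : y = x ∧ ls.length = Xs.length
    · rw [if_pos h, if_pos (by simpa using h), ren_ren]
      refine ren_congr fun a ha => ?_
      rw [hfn] at ha
      exact (mkRen_map Xs ls σ h.2 (by simpa using ha)).symm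
    · rw [if_neg h, if_neg (by simpa using h), ren]

end GT

/-- Link substitution commutes with graph substitution:
`T[G / x[X⃗]]⟨Y/Z⟩ = T⟨Y/Z⟩[G / x[X⃗]]`, given `fn(G) = {X⃗}` with the `X⃗`
pairwise distinct. -/
theorem lsubst_gsubst_comm (T : GT) (x : String) (Xs : List ℕ) (G : GT)
    (hnd : Xs.Nodup) (hfn : G.fn = Xs.toFinset) (Y Z : ℕ) :
    GT.lsubst (GT.gsubst x Xs G T) Y Z = GT.gsubst x Xs G (GT.lsubst T Y Z) := by
  simpa [GT.lsubst] using GT.ren_gsubst_comm (Function.update id Z Y) x Xs G hnd hfn T
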